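/- arXiv:2504.05048 — 2 statements merged into one kernel-verified Lean document; each statement's English description precedes it below -/
import Mathlib

section
/- Let a_1,…,a_l and ā_1,…,ā_l be complex numbers. Then ln(1 + Σ_{i=1}^l |a_i|^2) ≥ ln(1 + Σ_{i=1}^l |ā_i|^2) − Σ_{i=1}^l |ā_i|^2 + 2·Σ_{i=1}^l Re(conj(ā_i)·a_i) − (Σ_{i=1}^l |ā_i|^2)·(1 + Σ_{i=1}^l |a_i|^2)/(1 + Σ_{i=1}^l |ā_i|^2). -/
/-!
Write `x = ā`, `y = a` and `s = (1 + ‖x‖²) / (1 + ‖y‖²)`. Concavity of the logarithm, in the form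
`log s ≤ s - 1`, bounds `log (1 + ‖x‖²) - log (1 + ‖y‖²)`; Cauchy–Schwarz followed by the weighted
AM–GM inequality `2 ‖x‖ ‖y‖ ≤ s ‖y‖² + ‖x‖² / s` bounds `2 Re ⟪x, y⟫`. For this choice of `s` the
two error terms cancel exactly.
-/

open Real

theorem two_mul_mul_le_mul_sq_add_sq_div {u v s : ℝ} (hs : 0 < s) :
    2 * (u * v) ≤ s * v ^ 2 + u ^ 2 / s := by
  have hsq : s * v ^ 2 + u ^ 2 / s - 2 * (u * v) = (s * v - u) ^ 2 / s := by
    field_simp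
    ring
  rw [← sub_nonneg, hsq]
  positivity

theorem le_log_one_add_sq_of_le_mul {u v c : ℝ} (hc : c ≤ u * v) :
    log (1 + u ^ 2) - u ^ 2 + 2 * c - u ^ 2 * (1 + v ^ 2) / (1 + u ^ 2) ≤ log (1 + v ^ 2) := by
  have hu : 0 < 1 + u ^ 2 := by positivity
  have hv : 0 < 1 + v ^ 2 := by positivity
  set s := (1 + u ^ 2) / (1 + v ^ 2) with hs_def
  have hs : 0 < s := by positivity
  have hlog : log (1 + u ^ 2) - log (1 + v ^ 2) ≤ s - 1 := by
    rw [← log_div hu.ne' hv.ne']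
    exact log_le_sub_one_of_pos hs
  have hamgm := two_mul_mul_le_mul_sq_add_sq_div (u := u) (v := v) hs
  have hsv : s * v ^ 2 = 1 + u ^ 2 - s := by
    rw [hs_def]
    field_simp
    ring
  have hus : u ^ 2 / s = u ^ 2 * (1 + v ^ 2) / (1 + u ^ 2) := by
    rw [hs_def]
    field_simp
  linarith

theorem le_log_one_add_norm_sq {𝕜 E : Type*} [RCLike 𝕜] [NormedAddCommGroup E]
    [InnerProductSpace 𝕜 E] (x y : E) :
    log (1 + ‖x‖ ^ 2) - ‖x‖ ^ 2 + 2 * RCLike.re (inner 𝕜 x y)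
        - ‖x‖ ^ 2 * (1 + ‖y‖ ^ 2) / (1 + ‖x‖ ^ 2) ≤ log (1 + ‖y‖ ^ 2) :=
  le_log_one_add_sq_of_le_mul (re_inner_le_norm x y)

theorem stmt_2 (l : ℕ) (a abar : Fin l → ℂ) :
    Real.log (1 + ∑ i, ‖a i‖ ^ 2) ≥
      Real.log (1 + ∑ i, ‖abar i‖ ^ 2)
        - (∑ i, ‖abar i‖ ^ 2)
        + 2 * ∑ i, ((starRingEnd ℂ) (abar i) * a i).re
        - (∑ i, ‖abar i‖ ^ 2) * (1 + ∑ i, ‖a i‖ ^ 2)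
            / (1 + ∑ i, ‖abar i‖ ^ 2) := by
  have h := le_log_one_add_norm_sq (𝕜 := ℂ) (WithLp.toLp 2 abar) (WithLp.toLp 2 a)
  simpa only [EuclideanSpace.norm_sq_eq, PiLp.inner_apply, RCLike.inner_apply',
    RCLike.re_to_complex, Complex.re_sum] using h
end

section
/- Nemirovski's Lemma (sufficiency direction): Let R be a Hermitian matrix and E, F, Z matrices of compatible dimensions, and t > 0 a scalar. If there exists α ≥ 0 such that the block matrix [[R − α·FᴴF, −t·Eᴴ],[−t·E, α·I]] is positive semidefinite, then R ⪰ Eᴴ Z F + Fᴴ Zᴴ E for every Z with spectral norm ‖Z‖ ≤ t. -/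
/-!
Compressing the block matrix by the column `[I; t⁻¹ Z F]` yields
`R - α FᴴF - (EᴴZF + FᴴZᴴE) + (α / t²) FᴴZᴴZF ⪰ 0`; adding the positive semidefinite slack
`(α / t²) Fᴴ (t² I - ZᴴZ) F` cancels both `α`-terms.
-/

namespace Matrix.PosSemidef

variable {m n k R : Type*} [Fintype m] [Fintype n] [Fintype k]
  [Ring R] [PartialOrder R] [StarRing R]

theorem fromBlocks_conjTranspose_mul_mul_same {A : Matrix m m R} {B : Matrix m n R}
    {C : Matrix n m R} {D : Matrix n n R} (h : (fromBlocks A B C D).PosSemidef)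
    (X : Matrix m k R) (Y : Matrix n k R) :
    (Xᴴ * A * X + Yᴴ * C * X + Xᴴ * B * Y + Yᴴ * D * Y).PosSemidef := by
  have := h.conjTranspose_mul_mul_same (fromRows X Y)
  rwa [conjTranspose_fromRows_eq_fromCols_conjTranspose, fromCols_mul_fromBlocks,
    fromCols_mul_fromRows, Matrix.add_mul, Matrix.add_mul, ← add_assoc] at this

end Matrix.PosSemidef

open Matrix ComplexOrder in
theorem stmt_16_general {n p q : ℕ} (R : Matrix (Fin n) (Fin n) ℂ)
    (E : Matrix (Fin p) (Fin n) ℂ) (F : Matrix (Fin q) (Fin n) ℂ) (t : ℝ) (ht : 0 < t)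
    (hsuff : ∃ α : ℝ, 0 ≤ α ∧
      (Matrix.fromBlocks (R - (α : ℂ) • (Fᴴ * F)) (-(t : ℂ) • Eᴴ)
        (-(t : ℂ) • E) ((α : ℂ) • (1 : Matrix (Fin p) (Fin p) ℂ))).PosSemidef) :
    ∀ Z : Matrix (Fin p) (Fin q) ℂ,
      (((t : ℂ) ^ 2 • (1 : Matrix (Fin q) (Fin q) ℂ)) - Zᴴ * Z).PosSemidef →
      (R - (Eᴴ * Z * F + Fᴴ * Zᴴ * E)).PosSemidef := by
  obtain ⟨α, hα, hM⟩ := hsuff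
  intro Z hZ
  have ht' : (t : ℂ) ≠ 0 := by exact_mod_cast ht.ne'
  have hcoef : (0 : ℂ) ≤ ((α / t ^ 2 : ℝ) : ℂ) := by exact_mod_cast by positivity
  have hcompress := hM.fromBlocks_conjTranspose_mul_mul_same 1 ((t : ℂ)⁻¹ • (Z * F))
  have hslack := (hZ.conjTranspose_mul_mul_same F).smul hcoef
  convert hcompress.add hslack using 1
  simp only [conjTranspose_one, conjTranspose_smul, conjTranspose_mul, star_inv₀,
    Complex.star_def, Complex.conj_ofReal, Matrix.one_mul, Matrix.mul_one, Matrix.mul_sub,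
    Matrix.sub_mul, Matrix.mul_smul, Matrix.smul_mul, Matrix.mul_assoc]
  match_scalars <;> field_simp <;> ring

open Matrix ComplexOrder in
theorem stmt_16 {n p q : ℕ} (R : Matrix (Fin n) (Fin n) ℂ) (hR : R.IsHermitian)
    (E : Matrix (Fin p) (Fin n) ℂ) (F : Matrix (Fin q) (Fin n) ℂ) (t : ℝ) (ht : 0 < t)
    (hsuff : ∃ α : ℝ, 0 ≤ α ∧
      (Matrix.fromBlocks (R - (α : ℂ) • (Fᴴ * F)) (-(t : ℂ) • Eᴴ)
        (-(t : ℂ) • E) ((α : ℂ) • (1 : Matrix (Fin p) (Fin p) ℂ))).PosSemidef) :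
    ∀ Z : Matrix (Fin p) (Fin q) ℂ,
      (((t : ℂ) ^ 2 • (1 : Matrix (Fin q) (Fin q) ℂ)) - Zᴴ * Z).PosSemidef →
      (R - (Eᴴ * Z * F + Fᴴ * Zᴴ * E)).PosSemidef :=
  stmt_16_general R E F t ht hsuff
end
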